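/- arXiv:1112.4266 — 4 statements merged into one kernel-verified Lean document; each statement's English description precedes it below -/
import Mathlib

section
/- Let (Q,W) be a quiver with potential over a field K. If W and W' are cyclically equivalent potentials on Q, then their Jacobian ideals coincide: the closure of the ideal generated by {∂_a W : a ∈ Q₁} equals the closure of the ideal generated by {∂_a W' : a ∈ Q₁}, and hence the Jacobian algebras P(Q,W) and P(Q,W') are equal. -/
/-- A finite quiver: finite sets of vertices and arrows with source and target maps. -/
structure FinQuiver where
  V : Type
  A : Type
  fintypeV : Fintype V
  fintypeA : Fintype A
  decEqV : DecidableEq V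
  decEqA : DecidableEq A
  src : A → V
  tgt : A → V

attribute [instance] FinQuiver.fintypeV FinQuiver.fintypeA FinQuiver.decEqV FinQuiver.decEqA

namespace FinQuiver

variable (Q : FinQuiver) (K : Type) [Field K]

def IsPath (l : List Q.A) : Prop := l.Chain' (fun a b => Q.tgt a = Q.src b)

def IsCycle (l : List Q.A) : Prop :=
  Q.IsPath l ∧ ∃ a b, l.head? = some a ∧ l.getLast? = some b ∧ Q.tgt b = Q.src a

def IsPotential (W : List Q.A → K) : Prop :=
  ∀ l : List Q.A, W l ≠ 0 → Q.IsCycle l ∧ 2 ≤ l.length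

/-- The cyclic derivative `∂ₐW`. -/
def cycDer (a : Q.A) (W : List Q.A → K) : List Q.A → K :=
  fun q => ∑ j ∈ Finset.range (q.length + 1), W ((a :: q).rotate j)

def deltaFn (l : List Q.A) : List Q.A → K := Pi.single l 1

def truncAt (d : ℕ) (F : List Q.A → K) : List Q.A → K :=
  fun l => if l.length = d then F l else 0

/-- Cyclic equivalence of potentials. -/
def CycEquiv (W W' : List Q.A → K) : Prop :=
  ∀ d : ℕ, Q.truncAt K d (W - W') ∈ Submodule.span K
    { g : List Q.A → K | ∃ c : List Q.A, Q.IsCycle c ∧ c.length = d ∧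
        g = Q.deltaFn K c - Q.deltaFn K (c.rotate 1) }

/-- Multiplication (concatenation convolution) of formal series of paths. -/
def mulS (F G : List Q.A → K) : List Q.A → K :=
  fun l => ∑ n ∈ Finset.range (l.length + 1), F (l.take n) * G (l.drop n)

/-- The (not yet closed) two-sided ideal generated by a set `S` of series: the span of all
    products `p * s * q` with `p`, `q` paths and `s ∈ S`. -/
def idealGen (S : Set (List Q.A → K)) : Submodule K (List Q.A → K) :=
  Submodule.span K
    { g : List Q.A → K | ∃ p q : List Q.A, ∃ s ∈ S,
        g = Q.mulS K (Q.mulS K (Q.deltaFn K p) s) (Q.deltaFn K q) }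

/-- The closure (in the adic topology: degreewise approximation) of the two-sided ideal
    generated by `S`. -/
def closedIdeal (S : Set (List Q.A → K)) : Set (List Q.A → K) :=
  { F | ∀ d : ℕ, ∃ G ∈ Q.idealGen K S, ∀ l : List Q.A, l.length ≤ d → F l = G l }

/-- The closed ideal, as a `K`-submodule. -/
def closedIdealSubmodule (S : Set (List Q.A → K)) : Submodule K (List Q.A → K) where
  carrier := Q.closedIdeal K S
  zero_mem' := by
    intro d
    exact ⟨0, (Q.idealGen K S).zero_mem, fun l _ => rfl⟩
  add_mem' := by
    intro F F' hF hF' d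
    obtain ⟨G, hG, hFG⟩ := hF d
    obtain ⟨G', hG', hFG'⟩ := hF' d
    exact ⟨G + G', (Q.idealGen K S).add_mem hG hG', fun l hl => by
      simp [Pi.add_apply, hFG l hl, hFG' l hl]⟩
  smul_mem' := by
    intro c F hF d
    obtain ⟨G, hG, hFG⟩ := hF d
    exact ⟨c • G, (Q.idealGen K S).smul_mem c hG, fun l hl => by
      simp [Pi.smul_apply, hFG l hl]⟩

/-- The Jacobian algebra `P(Q,W)` (as a quotient of the complete path algebra by
    the closed Jacobian ideal). -/
def JacobianCarrier (W : List Q.A → K) : Type :=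
  (List Q.A → K) ⧸ Q.closedIdealSubmodule K (Set.range fun a : Q.A => Q.cycDer K a W)

end FinQuiver


section Aux

variable (Q : FinQuiver) (K : Type) [Field K]

lemma rotate_one_inj {α : Type} (M c : List α) (d : ℕ) (hd : 0 < d)
    (hM : M.length = d) (hc : c.length = d) (h : M.rotate 1 = c.rotate 1) : M = c := by
  have h2 := congrArg (fun N => N.rotate (d - 1)) h
  simp only [List.rotate_rotate] at h2
  have he : 1 + (d - 1) = d := by omega
  rw [he, ← hc, List.rotate_length, hc, ← hM, List.rotate_length] at h2
  exact h2

/-- Rotation reindexing: the sum of `δ_c` over all rotations of `L` equals the sum of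
`δ_{c.rotate 1}` over all rotations of `L`, when lengths match. -/
lemma sum_delta_rotate (c L : List Q.A) (d : ℕ) (hd : 0 < d)
    (hc : c.length = d) (hL : L.length = d) :
    ∑ j ∈ Finset.range d, Q.deltaFn K c (L.rotate j) =
      ∑ j ∈ Finset.range d, Q.deltaFn K (c.rotate 1) (L.rotate j) := by
  refine Finset.sum_nbij' (fun j => (j + 1) % d) (fun j => (j + (d - 1)) % d) ?_ ?_ ?_ ?_ ?_
  · intro j hj; exact Finset.mem_range.mpr (Nat.mod_lt _ hd)
  · intro j hj; exact Finset.mem_range.mpr (Nat.mod_lt _ hd)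
  · intro j hj
    show ((j + 1) % d + (d - 1)) % d = j
    rw [Nat.mod_add_mod]
    have : j + 1 + (d - 1) = j + d := by omega
    rw [this, Nat.add_mod_right, Nat.mod_eq_of_lt (Finset.mem_range.mp hj)]
  · intro j hj
    show ((j + (d - 1)) % d + 1) % d = j
    rw [Nat.mod_add_mod]
    have : j + (d - 1) + 1 = j + d := by omega
    rw [this, Nat.add_mod_right, Nat.mod_eq_of_lt (Finset.mem_range.mp hj)]
  · intro j hj
    have hmod : L.rotate ((j + 1) % d) = (L.rotate j).rotate 1 := by
      rw [← hL, List.rotate_mod]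
      exact (List.rotate_rotate L j 1).symm
    rw [hmod]
    have hlen : (L.rotate j).length = d := by rw [List.length_rotate, hL]
    have hiff : L.rotate j = c ↔ (L.rotate j).rotate 1 = c.rotate 1 := by
      constructor
      · intro hEq; rw [hEq]
      · intro hEq
        exact rotate_one_inj (L.rotate j) c d hd hlen hc hEq
    unfold FinQuiver.deltaFn
    rw [Pi.single_apply, Pi.single_apply]
    by_cases hcase : L.rotate j = c
    · rw [if_pos hcase, if_pos (hiff.mp hcase)]
    · rw [if_neg hcase, if_neg (fun hh => hcase (hiff.mpr hh))]

/-- Cyclically equivalent potentials have equal cyclic derivatives. -/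
lemma cycDer_eq_of_cycEquiv (W W' : List Q.A → K) (h : Q.CycEquiv K W W') (a : Q.A) :
    Q.cycDer K a W = Q.cycDer K a W' := by
  funext q
  set d := q.length + 1 with hd
  have hd0 : 0 < d := Nat.succ_pos _
  set L := a :: q with hLdef
  have hL : L.length = d := by simp [hLdef, hd]
  -- every element of the span kills the rotation sum
  have hspan : ∀ G ∈ Submodule.span K
      { g : List Q.A → K | ∃ c : List Q.A, Q.IsCycle c ∧ c.length = d ∧
          g = Q.deltaFn K c - Q.deltaFn K (c.rotate 1) },
      ∑ j ∈ Finset.range d, G (L.rotate j) = 0 := by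
    intro G hG
    induction hG using Submodule.span_induction with
    | mem g hg =>
      obtain ⟨c, _, hclen, rfl⟩ := hg
      simp only [Pi.sub_apply, Finset.sum_sub_distrib]
      rw [sum_delta_rotate Q K c L d hd0 hclen hL, sub_self]
    | zero => simp
    | add x y hx hy ihx ihy => simp [Finset.sum_add_distrib, ihx, ihy]
    | smul r x hx ihx =>
        simp only [Pi.smul_apply, smul_eq_mul]
        rw [← Finset.mul_sum, ihx, mul_zero]
  have hkey := hspan _ (h d)
  have htrunc : ∀ j ∈ Finset.range d,
      Q.truncAt K d (W - W') (L.rotate j) = W (L.rotate j) - W' (L.rotate j) := by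
    intro j _
    unfold FinQuiver.truncAt
    rw [if_pos (by rw [List.length_rotate, hL]), Pi.sub_apply]
  rw [Finset.sum_congr rfl htrunc, Finset.sum_sub_distrib, sub_eq_zero] at hkey
  unfold FinQuiver.cycDer
  exact hkey

end Aux

/-- If two potentials are cyclically equivalent then their Jacobian ideals
    (closures of the ideals generated by all cyclic derivatives) coincide, and hence the
    Jacobian algebras are equal. -/
theorem jacobian_ideal_eq_of_cyclically_equivalent
    (Q : FinQuiver) (K : Type) [Field K] (W W' : List Q.A → K)
    (hW : Q.IsPotential K W) (hW' : Q.IsPotential K W')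
    (h : Q.CycEquiv K W W') :
    Q.closedIdeal K (Set.range fun a : Q.A => Q.cycDer K a W) =
      Q.closedIdeal K (Set.range fun a : Q.A => Q.cycDer K a W') ∧
    Q.JacobianCarrier K W = Q.JacobianCarrier K W' := by
  have hfun : (fun a : Q.A => Q.cycDer K a W) = (fun a : Q.A => Q.cycDer K a W') :=
    funext fun a => cycDer_eq_of_cycEquiv Q K W W' h a
  constructor
  · rw [hfun]
  · unfold FinQuiver.JacobianCarrier
    rw [hfun]
end

section
/- Let Λ be a finite dimensional algebra, P a simple projective non-injective Λ-module, and 0 → P → E → τ⁻P → 0 the almost split (Auslander–Reiten) sequence starting at P. Then the middle term E is a projective Λ-module; more precisely, E is a direct sum of the indecomposable projectives P_{e(a)} indexed by the arrows a of the quiver of Λ starting at the source vertex corresponding to P. -/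
open CategoryTheory

section ModulePreamble

variable (Λ : Type) [Ring Λ]

/-- `P` is (isomorphic to) a direct summand of `X`. -/
def IsSummandOf (P X : Type) [AddCommGroup P] [Module Λ P] [AddCommGroup X] [Module Λ X] :
    Prop :=
  ∃ (s : P →ₗ[Λ] X) (r : X →ₗ[Λ] P), r.comp s = LinearMap.id

/-- `X` belongs to `add T`: `X` is a direct summand of a finite direct sum of copies of `T`. -/
def InAdd (X T : Type) [AddCommGroup X] [Module Λ X] [AddCommGroup T] [Module Λ T] : Prop :=
  ∃ (n : ℕ) (s : X →ₗ[Λ] (Fin n → T)) (r : (Fin n → T) →ₗ[Λ] X), r.comp s = LinearMap.id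

/-- `h` lies in the radical `rad_Λ(X, Y)` of the module category: for every `g : Y → X`
    the endomorphism `1 - g∘h` of `X` is invertible.  (Equivalently, no component of `h`
    between indecomposable direct summands is an isomorphism.) -/
def IsRadHom (X Y : Type) [AddCommGroup X] [Module Λ X] [AddCommGroup Y] [Module Λ Y]
    (h : X →ₗ[Λ] Y) : Prop :=
  ∀ g : Y →ₗ[Λ] X, IsUnit ((1 : Module.End Λ X) - (g.comp h : Module.End Λ X))

/-- An almost split (Auslander–Reiten) sequence `0 → A → B → C → 0`. -/
structure AlmostSplitSequence (A B C : Type) [AddCommGroup A] [Module Λ A]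
    [AddCommGroup B] [Module Λ B] [AddCommGroup C] [Module Λ C] where
  f : A →ₗ[Λ] B
  g : B →ₗ[Λ] C
  inj : Function.Injective f
  surj : Function.Surjective g
  exact : LinearMap.range f = LinearMap.ker g
  nonSplit : ¬ ∃ r : B →ₗ[Λ] A, r.comp f = LinearMap.id
  leftAlmostSplit : ∀ (X : Type) [AddCommGroup X] [Module Λ X] (u : A →ₗ[Λ] X),
    (¬ ∃ r : X →ₗ[Λ] A, r.comp u = LinearMap.id) → ∃ v : B →ₗ[Λ] X, v.comp f = u
  rightAlmostSplit : ∀ (X : Type) [AddCommGroup X] [Module Λ X] (u : X →ₗ[Λ] C),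
    (¬ ∃ s : C →ₗ[Λ] X, u.comp s = LinearMap.id) → ∃ v : X →ₗ[Λ] B, g.comp v = u
  fMinimal : ∀ h : B →ₗ[Λ] B, h.comp f = f → Function.Bijective h
  gMinimal : ∀ h : B →ₗ[Λ] B, g.comp h = g → Function.Bijective h

/-- The module `M` has projective dimension at most 1: it admits a projective
    presentation `0 → P¹ → P⁰ → M → 0`. -/
def ProjDimLE1 (M : Type) [AddCommGroup M] [Module Λ M] : Prop :=
  ∃ (P0 P1 : ModuleCat Λ) (d : P1 ⟶ P0) (e : P0 ⟶ ModuleCat.of Λ M),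
    Module.Projective Λ P0 ∧ Module.Projective Λ P1 ∧
    Function.Injective d ∧ Function.Surjective e ∧
    LinearMap.range d.hom = LinearMap.ker e.hom

/-- The module `M` has projective dimension at most 2: it admits a projective resolution
    `0 → P² → P¹ → P⁰ → M → 0`. -/
def ProjDimLE2 (M : Type) [AddCommGroup M] [Module Λ M] : Prop :=
  ∃ (P0 P1 P2 : ModuleCat Λ) (d2 : P2 ⟶ P1) (d1 : P1 ⟶ P0) (e : P0 ⟶ ModuleCat.of Λ M),
    Module.Projective Λ P0 ∧ Module.Projective Λ P1 ∧ Module.Projective Λ P2 ∧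
    Function.Injective d2 ∧ Function.Surjective e ∧
    LinearMap.range d2.hom = LinearMap.ker d1.hom ∧ LinearMap.range d1.hom = LinearMap.ker e.hom

/-- The ring `Λ` has global dimension at most 2. -/
def GlobalDimLE2 : Prop := ∀ M : ModuleCat Λ, ProjDimLE2 Λ M

end ModulePreamble

/-! Among the submodules of a finitely generated free module that map onto `E`, take a minimal
one `G` (`Λ` is artinian) and lift `P → E` through `G → E` using projectivity of `P`. If the lift
is not a split monomorphism, left almost splitness and left minimality make `E` a direct summand
of `G`, hence of the free module. If it splits, `G = P ⊕ G'`; since `P` is simple and `P → E`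
does not split, `G'` still maps onto `E`, contradicting minimality. -/

namespace AlmostSplitSequence

open LinearMap Submodule

variable {R : Type} [Ring R] {A B C : Type} [AddCommGroup A] [Module R A]
  [AddCommGroup B] [Module R B] [AddCommGroup C] [Module R C]

theorem exists_rightInverse_of_not_exists_leftInverse (S : AlmostSplitSequence R A B C)
    {G : Type} [AddCommGroup G] [Module R G] (h : G →ₗ[R] B) (f' : A →ₗ[R] G) (hf' : h ∘ₗ f' = S.f)
    (hf'_split : ¬ ∃ r : G →ₗ[R] A, r ∘ₗ f' = LinearMap.id) :
    ∃ s : B →ₗ[R] G, h ∘ₗ s = LinearMap.id := by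
  obtain ⟨v, hv⟩ := S.leftAlmostSplit G f' hf'_split
  have hbij : Function.Bijective (h ∘ₗ v) := S.fMinimal _ (by rw [comp_assoc, hv, hf'])
  let e := LinearEquiv.ofBijective (h ∘ₗ v) hbij
  exact ⟨v ∘ₗ e.symm.toLinearMap, LinearMap.ext e.apply_symm_apply⟩

theorem map_ker_eq_top_of_comp_eq_id [IsSimpleModule R A] (S : AlmostSplitSequence R A B C)
    {G : Type} [AddCommGroup G] [Module R G] (h : G →ₗ[R] B) (hh : Function.Surjective h)
    (f' : A →ₗ[R] G) (hf' : h ∘ₗ f' = S.f) (r : G →ₗ[R] A) (hr : r ∘ₗ f' = LinearMap.id) :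
    (ker r).map h = ⊤ := by
  have hG : range f' ⊔ ker r = ⊤ := by
    refine eq_top_iff.mpr fun x _ ↦ mem_sup.mpr ⟨f' (r x), ⟨r x, rfl⟩, x - f' (r x), ?_, by abel⟩
    simp [mem_ker, ← LinearMap.comp_apply r f', hr]
  have hB : range S.f ⊔ (ker r).map h = ⊤ := by
    rw [← hf', range_comp, ← Submodule.map_sup, hG, Submodule.map_top, range_eq_top.mpr hh]
  have hatom : IsAtom (range S.f) :=
    (isSimpleModule_iff_isAtom).mp (IsSimpleModule.congr (LinearEquiv.ofInjective S.f S.inj).symm)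
  by_contra hne
  have hdisj : Disjoint (range S.f) ((ker r).map h) :=
    hatom.not_le_iff_disjoint.mp fun hle ↦ hne (by rwa [sup_eq_right.mpr hle] at hB)
  exact S.nonSplit ⟨linearProjOfIsCompl _ S.f S.inj ⟨hdisj, codisjoint_iff.mpr hB⟩,
    LinearMap.ext (linearProjOfIsCompl_apply_left _ S.f S.inj _)⟩

theorem exists_rightInverse_of_surjective [IsSimpleModule R A] [Module.Projective R A]
    (S : AlmostSplitSequence R A B C) {F : Type} [AddCommGroup F] [Module R F] [IsArtinian R F]
    (π : F →ₗ[R] B) (hπ : Function.Surjective π) : ∃ s : B →ₗ[R] F, π ∘ₗ s = LinearMap.id := by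
  suffices ∀ G : Submodule R F, G.map π = ⊤ → ∃ s : B →ₗ[R] F, π ∘ₗ s = LinearMap.id from
    this ⊤ (by rw [Submodule.map_top, range_eq_top.mpr hπ])
  intro G
  induction G using WellFoundedLT.induction with
  | ind G ih =>
  intro hG
  let h := π ∘ₗ G.subtype
  have hh : Function.Surjective h := by
    rwa [← range_eq_top, range_comp, range_subtype]
  obtain ⟨f', hf'⟩ := Module.projective_lifting_property h S.f hh
  by_cases hsplit : ∃ r : G →ₗ[R] A, r ∘ₗ f' = LinearMap.id
  · obtain ⟨r, hr⟩ := hsplit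
    have hr_ne : r ≠ 0 := by
      rintro rfl
      have := IsSimpleModule.nontrivial R A
      obtain ⟨a, ha⟩ := exists_ne (0 : A)
      exact ha (by simpa using (LinearMap.congr_fun hr a).symm)
    have hlt : (ker r).map G.subtype < G := by
      simpa using map_strictMono_of_injective G.injective_subtype
        (lt_top_iff_ne_top.mpr (mt ker_eq_top.mp hr_ne))
    refine ih _ hlt ?_
    rw [← Submodule.map_comp]
    exact S.map_ker_eq_top_of_comp_eq_id h hh f' hf' r hr
  · obtain ⟨s, hs⟩ := S.exists_rightInverse_of_not_exists_leftInverse h f' hf' hsplit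
    exact ⟨G.subtype ∘ₗ s, by rw [← comp_assoc, hs]⟩

end AlmostSplitSequence

theorem middle_term_of_AR_sequence_starting_at_simple_projective_is_projective_general
    (K : Type) [Field K] (Λ : Type) [Ring Λ] [Algebra K Λ] [FiniteDimensional K Λ]
    (P E N : Type) [AddCommGroup P] [Module Λ P] [AddCommGroup E] [Module Λ E]
    [AddCommGroup N] [Module Λ N]
    [Module.Finite Λ E]
    (hsimple : IsSimpleModule Λ P) (hproj : Module.Projective Λ P)
    (S : AlmostSplitSequence Λ P E N) :
    Module.Projective Λ E := by
  have : IsArtinianRing Λ := IsArtinianRing.of_finite K Λ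
  obtain ⟨n, π, hπ⟩ := Module.Finite.exists_fin' Λ E
  obtain ⟨s, hs⟩ := S.exists_rightInverse_of_surjective π hπ
  exact Module.Projective.of_split s π hs

/-- Let `Λ` be a finite dimensional algebra, `P` a simple projective
    non-injective `Λ`-module and `0 → P → E → τ⁻P → 0` the almost split sequence starting
    at `P`.  Then the middle term `E` is a projective `Λ`-module (it is the direct sum of the
    indecomposable projectives at the targets of the arrows starting at the source vertex
    corresponding to `P`). -/
theorem middle_term_of_AR_sequence_starting_at_simple_projective_is_projective
    (K : Type) [Field K] (Λ : Type) [Ring Λ] [Algebra K Λ] [FiniteDimensional K Λ]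
    (P E N : Type) [AddCommGroup P] [Module Λ P] [AddCommGroup E] [Module Λ E]
    [AddCommGroup N] [Module Λ N]
    [Module.Finite Λ P] [Module.Finite Λ E] [Module.Finite Λ N]
    (hsimple : IsSimpleModule Λ P) (hproj : Module.Projective Λ P)
    (hninj : ¬ Module.Injective Λ P)
    (S : AlmostSplitSequence Λ P E N) :
    Module.Projective Λ E :=
  middle_term_of_AR_sequence_starting_at_simple_projective_is_projective_general K Λ P E N hsimple
    hproj S
end

section
/- Let Λ be a basic finite dimensional algebra, k a source of its quiver with P_k the associated simple projective module, and suppose P_k is not injective. Then T_k := τ⁻P_k ⊕ Λ/P_k is a tilting module, i.e. (i) pd T_k ≤ 1, (ii) Ext¹_Λ(T_k, T_k) = 0, and (iii) there is a short exact sequence 0 → Λ → T⁰ → T¹ → 0 with T⁰, T¹ ∈ add T_k. -/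
open CategoryTheory

/-!
The middle term `E` of the almost split sequence `0 → P → E → N → 0` is projective: given a
surjection `π : M → E`, lift `f` to `t : P → M`; by the right almost split property and induction
on the dimension (`t(P) ≠ 0`), `g` lifts through `M ⧸ t(P) → N`, and `M` is the pullback of `E`
and `M ⧸ t(P)` over `N`. Since `f` is left minimal and every map `E → P` kills `f(P)`, `E` has no
summand `P`, so `E ∈ add Q`. Then `0 → P → E × Q → N × Q → 0` and `0 → Λ → E × Q → N → 0` give
(i) and (iii). For (ii), a non-split extension of `N` by a module `X` without summand `P` factors
through `g`; the induced map `X → P` is then either zero, which splits `g`, or onto the simple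
projective `P`, which makes `P` a summand of `X`.
-/

open Function LinearMap

section

variable {Λ : Type} [Ring Λ] {A B C D : Type} [AddCommGroup A] [Module Λ A] [AddCommGroup B]
  [Module Λ B] [AddCommGroup C] [Module Λ C] [AddCommGroup D] [Module Λ D]

theorem LinearMap.exists_leftInverse_of_bijective_comp {s : A →ₗ[Λ] B} (r : B →ₗ[Λ] A)
    (h : Bijective (r ∘ₗ s)) : ∃ r' : B →ₗ[Λ] A, r' ∘ₗ s = LinearMap.id :=
  ⟨(LinearEquiv.ofBijective _ h).symm.toLinearMap ∘ₗ r,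
    LinearMap.ext (LinearEquiv.ofBijective _ h).symm_apply_apply⟩

theorem LinearMap.exists_leftInverse_of_isCompl {f : A →ₗ[Λ] B} (hf : Injective f)
    {W : Submodule Λ B} (h : IsCompl (range f) W) : ∃ r : B →ₗ[Λ] A, r ∘ₗ f = LinearMap.id :=
  ⟨(LinearEquiv.ofInjective f hf).symm.toLinearMap ∘ₗ Submodule.projectionOnto _ W h, by
    ext x
    apply hf
    simp⟩

theorem LinearMap.exists_comp_eq_of_range_le {f : B →ₗ[Λ] C} (hf : Injective f)
    {u : A →ₗ[Λ] C} (h : range u ≤ range f) : ∃ j : A →ₗ[Λ] B, f ∘ₗ j = u :=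
  ⟨(LinearEquiv.ofInjective f hf).symm.toLinearMap ∘ₗ u.codRestrict _ fun x ↦ h ⟨x, rfl⟩,
    by ext; simp⟩

theorem Function.Exact.exists_comp_eq_of_comp_eq_zero {ι : A →ₗ[Λ] B} {p : B →ₗ[Λ] C}
    (hex : Exact ι p) (hp : Surjective p) {v : B →ₗ[Λ] D} (hv : v ∘ₗ ι = 0) :
    ∃ w : C →ₗ[Λ] D, w ∘ₗ p = v :=
  ⟨(range ι).liftQ v (range_le_ker_iff.mpr hv) ∘ₗ
    (hex.linearEquivOfSurjective hp).symm.toLinearMap, by ext; simp⟩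

theorem Function.Exact.inl_comp_prodMap_id {f : A →ₗ[Λ] B} {g : B →ₗ[Λ] C} (h : Exact f g) :
    Exact (inl Λ B D ∘ₗ f) (g.prodMap (LinearMap.id : D →ₗ[Λ] D)) := by
  rintro ⟨b, d⟩
  rw [prodMap_apply, LinearMap.id_apply, Prod.mk_eq_zero, h b]
  simp [Prod.ext_iff, eq_comm, and_comm]

theorem Function.Exact.prodMap_id_comp_fst {f : A →ₗ[Λ] B} {g : B →ₗ[Λ] C} (h : Exact f g) :
    Exact (f.prodMap (LinearMap.id : D →ₗ[Λ] D)) (g ∘ₗ fst Λ B D) := by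
  rintro ⟨b, d⟩
  simp [Prod.ext_iff, h b]

theorem exists_rightInverse_of_lift_to_quotient {f : A →ₗ[Λ] B} {g : B →ₗ[Λ] C}
    (hf : Injective f) (hfg : Exact f g) {π : D →ₗ[Λ] B} {t : A →ₗ[Λ] D} (ht : π ∘ₗ t = f)
    {ρ : D ⧸ range t →ₗ[Λ] C} (hρ : ρ ∘ₗ (range t).mkQ = g ∘ₗ π) {h : B →ₗ[Λ] D ⧸ range t}
    (hh : ρ ∘ₗ h = g) : ∃ s : B →ₗ[Λ] D, π ∘ₗ s = LinearMap.id := by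
  -- `θ` identifies `D` with the pullback of `B` and `D ⧸ t(A)` over `C`
  set θ := π.prod (range t).mkQ
  have hθ : Injective θ := by
    rw [← ker_eq_bot, Submodule.eq_bot_iff]
    intro m hm
    obtain ⟨hπm, x, rfl⟩ : π m = 0 ∧ m ∈ range t := by simpa [θ] using hm
    rw [show x = 0 from hf (by simpa [← ht] using hπm), map_zero]
  have hrange : range (LinearMap.id.prod h) ≤ range θ := by
    rintro _ ⟨b, rfl⟩
    obtain ⟨m, hm⟩ := (range t).mkQ_surjective (h b)
    obtain ⟨z, hz⟩ : π m - b ∈ Set.range f := (hfg _).mp <| by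
      rw [map_sub, ← LinearMap.comp_apply, ← hρ, LinearMap.comp_apply, hm,
        ← LinearMap.comp_apply, hh, sub_self]
    refine ⟨m - t z, Prod.ext ?_ ?_⟩
    · simp [θ, ← LinearMap.comp_apply π t, ht, hz]
    · simp [θ, ← hm, (Submodule.Quotient.mk_eq_zero _).mpr (mem_range_self t z)]
  obtain ⟨s, hs⟩ := exists_comp_eq_of_range_le hθ hrange
  exact ⟨s, by rw [← fst_prod π (range t).mkQ, LinearMap.comp_assoc, hs, fst_prod]⟩

theorem Submodule.finrank_quotient_lt (K : Type) [Field K] [Algebra K Λ] [Module K A]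
    [IsScalarTower K Λ A] [FiniteDimensional K A] {p : Submodule Λ A} (hp : p ≠ ⊥) :
    Module.finrank K (A ⧸ p) < Module.finrank K A := by
  rw [← (Submodule.Quotient.restrictScalarsEquiv K p).finrank_eq,
    ← (p.restrictScalars K).finrank_quotient_add_finrank]
  have : Module.finrank K (p.restrictScalars K) ≠ 0 := fun h0 ↦ hp (by simpa using h0)
  omega

theorem IsSummandOf.of_linearEquiv (e : A ≃ₗ[Λ] B) : IsSummandOf Λ A B :=
  ⟨e.toLinearMap, e.symm.toLinearMap, by ext; simp⟩

theorem IsSummandOf.of_bijective_comp (s : A →ₗ[Λ] B) (r : B →ₗ[Λ] A)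
    (h : Bijective (r ∘ₗ s)) : IsSummandOf Λ A B :=
  ⟨s, exists_leftInverse_of_bijective_comp r h⟩

theorem IsSummandOf.trans : IsSummandOf Λ A B → IsSummandOf Λ B C → IsSummandOf Λ A C
  | ⟨s, r, h⟩, ⟨s', r', h'⟩ => ⟨s' ∘ₗ s, r ∘ₗ r', by
      rw [LinearMap.comp_assoc, ← LinearMap.comp_assoc s s' r', h', LinearMap.id_comp, h]⟩

theorem IsSummandOf.pi (ι : Type) : IsSummandOf Λ A B → IsSummandOf Λ (ι → A) (ι → B)
  | ⟨s, r, h⟩ => ⟨s.compLeft ι, r.compLeft ι,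
      LinearMap.ext fun φ ↦ funext fun i ↦ LinearMap.congr_fun h (φ i)⟩

theorem IsSummandOf.prodMap :
    IsSummandOf Λ A B → IsSummandOf Λ C D → IsSummandOf Λ (A × C) (B × D)
  | ⟨s, r, h⟩, ⟨s', r', h'⟩ => ⟨s.prodMap s', r.prodMap r', by
      rw [LinearMap.prodMap_comp, h, h', LinearMap.prodMap_id]⟩

theorem isSummandOf_inl : IsSummandOf Λ A (A × B) := ⟨inl Λ A B, fst Λ A B, fst_comp_inl Λ A B⟩

theorem isSummandOf_inr : IsSummandOf Λ B (A × B) := ⟨inr Λ A B, snd Λ A B, snd_comp_inr Λ A B⟩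

theorem not_isSummandOf_prod [IsSimpleModule Λ A] (hB : ¬ IsSummandOf Λ A B)
    (hC : ¬ IsSummandOf Λ A C) : ¬ IsSummandOf Λ A (B × C) := by
  rintro ⟨s, r, hrs⟩
  have hsum : (r ∘ₗ inl Λ B C) ∘ₗ (fst Λ B C ∘ₗ s) + (r ∘ₗ inr Λ B C) ∘ₗ (snd Λ B C ∘ₗ s) =
      LinearMap.id := by
    rw [← hrs]; ext x; simp [← map_add]
  rcases ((r ∘ₗ inl Λ B C) ∘ₗ (fst Λ B C ∘ₗ s)).bijective_or_eq_zero with hbij | hzero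
  · exact hB (.of_bijective_comp _ _ hbij)
  · exact hC ⟨snd Λ B C ∘ₗ s, r ∘ₗ inr Λ B C, by rwa [hzero, zero_add] at hsum⟩

theorem inAdd_iff : InAdd Λ A B ↔ ∃ n, IsSummandOf Λ A (Fin n → B) := Iff.rfl

theorem InAdd.of_isSummandOf (h : IsSummandOf Λ A B) : InAdd Λ A B :=
  inAdd_iff.mpr ⟨1, h.trans (.of_linearEquiv (LinearEquiv.funUnique (Fin 1) Λ B).symm)⟩

theorem InAdd.trans_isSummandOf (h : InAdd Λ A B) (h' : IsSummandOf Λ B C) : InAdd Λ A C :=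
  have ⟨n, hn⟩ := inAdd_iff.mp h
  inAdd_iff.mpr ⟨n, hn.trans (h'.pi _)⟩

theorem InAdd.prod (hA : InAdd Λ A C) (hB : InAdd Λ B C) : InAdd Λ (A × B) C :=
  have ⟨m, hm⟩ := inAdd_iff.mp hA
  have ⟨n, hn⟩ := inAdd_iff.mp hB
  inAdd_iff.mpr ⟨m + n, (hm.prodMap hn).trans <| .of_linearEquiv <|
    (LinearEquiv.sumArrowLequivProdArrow (Fin m) (Fin n) Λ C).symm ≪≫ₗ
      LinearEquiv.funCongrLeft Λ C finSumFinEquiv.symm⟩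

theorem InAdd.of_projective (A : Type) [AddCommGroup A] [Module Λ A] [Module.Finite Λ A]
    [Module.Projective Λ A] : InAdd Λ A Λ :=
  have ⟨n, f, g, _, _, hfg⟩ := Module.Finite.exists_comp_eq_id_of_projective Λ A
  inAdd_iff.mpr ⟨n, g, f, hfg⟩

end

namespace AlmostSplitSequence

variable {Λ : Type} [Ring Λ] {P E N : Type} [AddCommGroup P] [Module Λ P] [AddCommGroup E]
  [Module Λ E] [AddCommGroup N] [Module Λ N]

theorem exact_f_g (S : AlmostSplitSequence Λ P E N) : Exact S.f S.g :=
  LinearMap.exact_iff.mpr S.exact.symm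

theorem not_exists_rightInverse (S : AlmostSplitSequence Λ P E N) :
    ¬ ∃ σ : N →ₗ[Λ] E, S.g ∘ₗ σ = LinearMap.id := fun h ↦
  S.nonSplit (((S.exact_f_g.split_tfae S.inj S.surj).out 0 1).mp h)

variable [IsSimpleModule Λ P]

theorem comp_f_eq_zero (S : AlmostSplitSequence Λ P E N) (c : E →ₗ[Λ] P) : c ∘ₗ S.f = 0 :=
  (c ∘ₗ S.f).bijective_or_eq_zero.resolve_left fun h ↦
    S.nonSplit (exists_leftInverse_of_bijective_comp c h)

theorem not_isSummandOf_middle (S : AlmostSplitSequence Λ P E N) : ¬ IsSummandOf Λ P E := by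
  rintro ⟨t, ρ, hρt⟩
  have hbij : Bijective (LinearMap.id - t ∘ₗ ρ : E →ₗ[Λ] E) := S.fMinimal _ <| by
    rw [LinearMap.sub_comp, LinearMap.comp_assoc, S.comp_f_eq_zero ρ, LinearMap.comp_zero,
      sub_zero, LinearMap.id_comp]
  have hkill : (LinearMap.id - t ∘ₗ ρ : E →ₗ[Λ] E) ∘ₗ t = 0 := by
    rw [LinearMap.sub_comp, LinearMap.comp_assoc, hρt, LinearMap.comp_id, LinearMap.id_comp,
      sub_self]
  have ht : t = 0 := by
    ext x
    exact hbij.injective (by simpa using LinearMap.congr_fun hkill x)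
  have : Nontrivial P := IsSimpleModule.nontrivial Λ P
  obtain ⟨x, hx⟩ := exists_ne (0 : P)
  exact hx (by simpa [ht] using (LinearMap.congr_fun hρt x).symm)

theorem surjective_of_surjective_g_comp (S : AlmostSplitSequence Λ P E N) {W : Type}
    [AddCommGroup W] [Module Λ W] (v : W →ₗ[Λ] E) (hv : Surjective (S.g ∘ₗ v)) :
    Surjective v := by
  have hsup : range S.f ⊔ range v = ⊤ := by
    refine eq_top_iff.mpr fun e _ ↦ ?_
    obtain ⟨w, hw⟩ := hv (S.g e)
    have : e - v w ∈ range S.f := by simp_all [S.exact]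
    exact Submodule.mem_sup.mpr ⟨_, this, v w, mem_range_self v w, sub_add_cancel e (v w)⟩
  rcases eq_bot_or_eq_top (Submodule.comap S.f (range v)) with h | h
  · refine absurd (exists_leftInverse_of_isCompl S.inj ⟨?_, codisjoint_iff.mpr hsup⟩) S.nonSplit
    rw [Submodule.disjoint_def]
    rintro _ ⟨x, rfl⟩ hx
    rw [(Submodule.mem_bot Λ).mp (h ▸ hx : x ∈ (⊥ : Submodule Λ P)), map_zero]
  · rw [← range_eq_top, ← hsup, sup_eq_right.mpr (range_le_iff_comap.mpr h)]

theorem inAdd_of_inAdd_prod (S : AlmostSplitSequence Λ P E N) {Q : Type} [AddCommGroup Q]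
    [Module Λ Q] (h : InAdd Λ E (P × Q)) : InAdd Λ E Q := by
  obtain ⟨n, s, r, hrs⟩ := h
  have hsf : (inr Λ P Q).compLeft (Fin n) ∘ₗ (snd Λ P Q).compLeft (Fin n) ∘ₗ s ∘ₗ S.f =
      s ∘ₗ S.f :=
    LinearMap.ext fun x ↦ funext fun i ↦ Prod.ext (by
      simpa using (LinearMap.congr_fun (S.comp_f_eq_zero ((fst Λ P Q ∘ₗ proj i) ∘ₗ s)) x).symm)
      rfl
  refine inAdd_iff.mpr ⟨n, .of_bijective_comp ((snd Λ P Q).compLeft (Fin n) ∘ₗ s)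
    (r ∘ₗ (inr Λ P Q).compLeft (Fin n)) (S.fMinimal _ ?_)⟩
  simp only [LinearMap.comp_assoc] at hsf ⊢
  rw [hsf, ← LinearMap.comp_assoc, hrs, LinearMap.id_comp]

variable [Module.Projective Λ P]

theorem not_isSummandOf_right (S : AlmostSplitSequence Λ P E N) : ¬ IsSummandOf Λ P N := by
  rintro ⟨s, r, hrs⟩
  obtain ⟨t, ht⟩ := Module.projective_lifting_property S.g s S.surj
  exact S.not_isSummandOf_middle ⟨t, r ∘ₗ S.g, by rw [LinearMap.comp_assoc, ht, hrs]⟩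

theorem exists_rightInverse_of_not_isSummandOf (S : AlmostSplitSequence Λ P E N) {X M : Type}
    [AddCommGroup X] [Module Λ X] [AddCommGroup M] [Module Λ M] (hX : ¬ IsSummandOf Λ P X)
    {ι : X →ₗ[Λ] M} {p : M →ₗ[Λ] N} (hp : Surjective p) (hex : Exact ι p) :
    ∃ σ : N →ₗ[Λ] M, p ∘ₗ σ = LinearMap.id := by
  by_contra hsplit
  obtain ⟨v, hv⟩ := S.rightAlmostSplit M p hsplit
  have hvι : S.g ∘ₗ (v ∘ₗ ι) = 0 := by
    rw [← LinearMap.comp_assoc, hv, hex.linearMap_comp_eq_zero]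
  obtain ⟨j, hj⟩ := exists_comp_eq_of_range_le S.inj (S.exact ▸ range_le_ker_iff.mpr hvι)
  rcases eq_bot_or_eq_top (range j) with hj0 | hjtop
  · obtain ⟨w, hw⟩ := hex.exists_comp_eq_of_comp_eq_zero hp (v := v) <| by
      rw [← hj, range_eq_bot.mp hj0, LinearMap.comp_zero]
    refine S.not_exists_rightInverse ⟨w, (cancel_right hp).mp ?_⟩
    rw [LinearMap.comp_assoc, hw, hv, LinearMap.id_comp]
  · exact hX ⟨_, j, (j.exists_rightInverse_of_surjective hjtop).choose_spec⟩

theorem exists_rightInverse_prod (S : AlmostSplitSequence Λ P E N) {Q X M : Type}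
    [AddCommGroup Q] [Module Λ Q] [Module.Projective Λ Q] [AddCommGroup X] [Module Λ X]
    [AddCommGroup M] [Module Λ M] (hX : ¬ IsSummandOf Λ P X) {ι : X →ₗ[Λ] M}
    {p : M →ₗ[Λ] N × Q} (hp : Surjective p) (hex : Exact ι p) :
    ∃ σ : N × Q →ₗ[Λ] M, p ∘ₗ σ = LinearMap.id := by
  -- the pullback of the extension along `N → N × Q`
  set M' := ker (snd Λ N Q ∘ₗ p)
  have hι (x : X) : ι x ∈ M' := by simp [M', hex.apply_apply_eq_zero]
  set p' : M' →ₗ[Λ] N := fst Λ N Q ∘ₗ p ∘ₗ M'.subtype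
  have hp' : Surjective p' := fun y ↦
    have ⟨m, hm⟩ := hp (y, 0)
    ⟨⟨m, by simp [M', hm]⟩, by simp [p', hm]⟩
  have hex' : Exact (ι.codRestrict M' hι) p' := by
    rintro ⟨m, hm⟩
    have hpm : p m = 0 ↔ p' ⟨m, hm⟩ = 0 := ⟨congrArg Prod.fst, (Prod.ext · hm)⟩
    simp [hpm.symm, hex m, Subtype.ext_iff]
  obtain ⟨σN, hσN⟩ := S.exists_rightInverse_of_not_isSummandOf hX hp' hex'
  obtain ⟨σQ, hσQ⟩ := Module.projective_lifting_property p (inr Λ N Q) hp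
  refine ⟨(M'.subtype ∘ₗ σN).coprod σQ, prod_ext ?_ ?_⟩
  · ext y
    · simpa [p'] using LinearMap.congr_fun hσN y
    · have h2 : (p (σN y)).2 = 0 := (σN y).2
      simpa using h2
  · rw [LinearMap.comp_assoc, coprod_inr, hσQ, LinearMap.id_comp]

theorem exists_rightInverse_of_surjective_s7 (K : Type) [Field K] [Algebra K Λ]
    (S : AlmostSplitSequence Λ P E N) {M : Type} [AddCommGroup M] [Module Λ M] [Module K M]
    [IsScalarTower K Λ M] [FiniteDimensional K M] {π : M →ₗ[Λ] E} (hπ : Surjective π) :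
    ∃ s : E →ₗ[Λ] M, π ∘ₗ s = LinearMap.id := by
  induction hd : Module.finrank K M using Nat.strong_induction_on generalizing M with
  | _ d ih =>
  obtain ⟨t, ht⟩ := Module.projective_lifting_property π S.f hπ
  have ht_inj : Injective t := Injective.of_comp (f := π) (by rw [← coe_comp, ht]; exact S.inj)
  have hle : range t ≤ ker (S.g ∘ₗ π) := by
    rw [range_le_ker_iff, LinearMap.comp_assoc, ht, S.exact_f_g.linearMap_comp_eq_zero]
  set ρ := (range t).liftQ (S.g ∘ₗ π) hle
  have hρ : ρ ∘ₗ (range t).mkQ = S.g ∘ₗ π := (range t).liftQ_mkQ _ hle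
  have hρ_surj : Surjective ρ := Surjective.of_comp (g := (range t).mkQ) <| by
    rw [← coe_comp, hρ, coe_comp]; exact S.surj.comp hπ
  obtain ⟨h, hh⟩ : ∃ h : E →ₗ[Λ] M ⧸ range t, ρ ∘ₗ h = S.g := by
    by_cases hsplit : ∃ σ, ρ ∘ₗ σ = LinearMap.id
    · obtain ⟨σ, hσ⟩ := hsplit
      exact ⟨σ ∘ₗ S.g, by rw [← LinearMap.comp_assoc, hσ, LinearMap.id_comp]⟩
    obtain ⟨v, hv⟩ := S.rightAlmostSplit _ ρ hsplit
    have : Nontrivial P := IsSimpleModule.nontrivial Λ P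
    have hne : range t ≠ ⊥ := Submodule.nontrivial_iff_ne_bot.mp
      (LinearEquiv.ofInjective t ht_inj).symm.toEquiv.nontrivial
    obtain ⟨s', hs'⟩ := ih _ (hd ▸ Submodule.finrank_quotient_lt K hne)
      (S.surjective_of_surjective_g_comp v (hv ▸ hρ_surj)) rfl
    exact ⟨s', by rw [← hv, LinearMap.comp_assoc, hs', LinearMap.comp_id]⟩
  exact exists_rightInverse_of_lift_to_quotient S.inj S.exact_f_g ht hρ hh

theorem projective_middle (K : Type) [Field K] [Algebra K Λ] [FiniteDimensional K Λ]
    [Module.Finite Λ E] (S : AlmostSplitSequence Λ P E N) : Module.Projective Λ E :=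
  have ⟨_, π, hπ⟩ := Module.Finite.exists_fin' Λ E
  have ⟨s, hs⟩ := S.exists_rightInverse_of_surjective_s7 K hπ
  .of_split s π hs

end AlmostSplitSequence

theorem APR_module_is_tilting_general
    (K : Type) [Field K] (Λ : Type) [Ring Λ] [Algebra K Λ] [FiniteDimensional K Λ]
    (P Q E N : Type) [AddCommGroup P] [Module Λ P] [AddCommGroup Q] [Module Λ Q]
    [AddCommGroup E] [Module Λ E] [AddCommGroup N] [Module Λ N]
    [Module.Finite Λ E]
    (hsimple : IsSimpleModule Λ P) (hproj : Module.Projective Λ P)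
    -- Λ decomposes as the direct sum of P and the remaining indecomposable projectives
    (decomp : (Λ ≃ₗ[Λ] P × Q))
    -- Λ basic: P occurs only once, i.e. Q has no direct summand isomorphic to P
    (hQ : ¬ IsSummandOf Λ P Q)
    (S : AlmostSplitSequence Λ P E N) :
    -- (i) projective dimension at most 1
    ProjDimLE1 Λ (N × Q) ∧
    -- (ii) Ext¹(T,T) = 0 : every short exact sequence 0 → T → M → T → 0 splits
    (∀ (M : Type) [AddCommGroup M] [Module Λ M] (i : (N × Q) →ₗ[Λ] M)
        (p : M →ₗ[Λ] (N × Q)),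
        Function.Injective i → Function.Surjective p →
        LinearMap.range i = LinearMap.ker p →
        ∃ r : M →ₗ[Λ] (N × Q), r.comp i = LinearMap.id) ∧
    -- (iii) a coresolution 0 → Λ → T⁰ → T¹ → 0 by modules in add T
    (∃ (T0 T1 : ModuleCat Λ) (u : Λ →ₗ[Λ] T0) (v : T0 ⟶ T1),
        InAdd Λ T0 (N × Q) ∧ InAdd Λ T1 (N × Q) ∧
        Function.Injective u ∧ Function.Surjective v ∧
        LinearMap.range u = LinearMap.ker v.hom) := by
  have := hsimple
  have := hproj
  have hQproj : Module.Projective Λ Q := .of_split (decomp.symm.toLinearMap ∘ₗ inr Λ P Q)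
    (snd Λ P Q ∘ₗ decomp.toLinearMap) (by ext; simp)
  have hEproj : Module.Projective Λ E := S.projective_middle K
  have hE : InAdd Λ E Q :=
    S.inAdd_of_inAdd_prod ((InAdd.of_projective E).trans_isSummandOf (.of_linearEquiv decomp))
  refine ⟨?_, fun M _ _ i p hi hp hexact ↦ ?_, ?_⟩
  · exact ⟨.of Λ (E × Q), .of Λ P, ModuleCat.ofHom (inl Λ E Q ∘ₗ S.f),
      ModuleCat.ofHom (S.g.prodMap LinearMap.id), inferInstanceAs (Module.Projective Λ (E × Q)),
      hproj, inl_injective.comp S.inj, S.surj.prodMap surjective_id,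
      S.exact_f_g.inl_comp_prodMap_id.linearMap_ker_eq.symm⟩
  · have hex : Exact i p := LinearMap.exact_iff.mpr hexact.symm
    have hT : ¬ IsSummandOf Λ P (N × Q) := not_isSummandOf_prod S.not_isSummandOf_right hQ
    exact ((hex.split_tfae hi hp).out 0 1).mp (S.exists_rightInverse_prod hT hp hex)
  · refine ⟨.of Λ (E × Q), .of Λ N, S.f.prodMap LinearMap.id ∘ₗ decomp.toLinearMap,
      ModuleCat.ofHom (S.g ∘ₗ fst Λ E Q),
      (hE.trans_isSummandOf isSummandOf_inr).prod (.of_isSummandOf isSummandOf_inr),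
      .of_isSummandOf isSummandOf_inl, (S.inj.prodMap injective_id).comp decomp.injective,
      S.surj.comp Prod.fst_surjective, ?_⟩
    exact (LinearEquiv.precomp_exact_iff_exact.mpr
      S.exact_f_g.prodMap_id_comp_fst).linearMap_ker_eq.symm

/-- Let `Λ` be a basic finite dimensional algebra, `k` a source of its
    quiver with simple projective non-injective module `P = P_k`, so that `Λ ≅ P ⊕ Q` with
    `Q = Λ/P_k` having no summand isomorphic to `P`, and let `0 → P → E → N → 0`
    (`N = τ⁻P`) be the almost split sequence starting at `P`.  Then the APR tilting module
    `T_k = τ⁻P ⊕ Λ/P_k = N × Q` is a tilting module: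
    (i) `pd T_k ≤ 1`; (ii) `Ext¹(T_k, T_k) = 0` (every self-extension splits);
    (iii) there is a short exact sequence `0 → Λ → T⁰ → T¹ → 0` with `T⁰, T¹ ∈ add T_k`. -/
theorem APR_module_is_tilting
    (K : Type) [Field K] (Λ : Type) [Ring Λ] [Algebra K Λ] [FiniteDimensional K Λ]
    (P Q E N : Type) [AddCommGroup P] [Module Λ P] [AddCommGroup Q] [Module Λ Q]
    [AddCommGroup E] [Module Λ E] [AddCommGroup N] [Module Λ N]
    [Module.Finite Λ P] [Module.Finite Λ Q] [Module.Finite Λ E] [Module.Finite Λ N]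
    (hsimple : IsSimpleModule Λ P) (hproj : Module.Projective Λ P)
    (hninj : ¬ Module.Injective Λ P)
    -- Λ decomposes as the direct sum of P and the remaining indecomposable projectives
    (decomp : (Λ ≃ₗ[Λ] P × Q))
    -- Λ basic: P occurs only once, i.e. Q has no direct summand isomorphic to P
    (hQ : ¬ IsSummandOf Λ P Q)
    (S : AlmostSplitSequence Λ P E N) :
    -- (i) projective dimension at most 1
    ProjDimLE1 Λ (N × Q) ∧
    -- (ii) Ext¹(T,T) = 0 : every short exact sequence 0 → T → M → T → 0 splits
    (∀ (M : Type) [AddCommGroup M] [Module Λ M] (i : (N × Q) →ₗ[Λ] M)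
        (p : M →ₗ[Λ] (N × Q)),
        Function.Injective i → Function.Surjective p →
        LinearMap.range i = LinearMap.ker p →
        ∃ r : M →ₗ[Λ] (N × Q), r.comp i = LinearMap.id) ∧
    -- (iii) a coresolution 0 → Λ → T⁰ → T¹ → 0 by modules in add T
    (∃ (T0 T1 : ModuleCat Λ) (u : Λ →ₗ[Λ] T0) (v : T0 ⟶ T1),
        InAdd Λ T0 (N × Q) ∧ InAdd Λ T1 (N × Q) ∧
        Function.Injective u ∧ Function.Surjective v ∧
        LinearMap.range u = LinearMap.ker v.hom) :=
  APR_module_is_tilting_general K Λ P Q E N hsimple hproj decomp hQ S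
end

section
/- Let (Q,W,C) be a QP with a cut obtained from an algebra Λ = K̂Q_C/⟨∂_c W : c ∈ C⟩, let k be a vertex which is a source of Q_C such that all arrows of Q ending at k belong to C and all arrows starting at k do not. Write the left premutation μ̃_k^L(Q,W,C) = (Q',W',d'). Then every arrow of Q' has degree 0 or 1: the reversed arrows a* (for a: k → v, a ∉ C) have degree 0, the reversed arrows ρ* (for ρ: u → k, ρ ∈ C) have degree 0, and the composite arrows [ρa] have degree 1; consequently the degree-1 arrows of Q' form a cut of (Q',W'). -/
namespace FinQuiver

variable (Q : FinQuiver) (K : Type) [Field K]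

/-- The grading attached to a cut `C`: arrows in `C` get degree 1, others degree 0. -/
def cutDegree (C : Finset Q.A) : Q.A → ℤ := fun a => if a ∈ C then 1 else 0

/-- A subset of arrows is a cut of the potential `W` when every cycle appearing in `W`
    contains exactly one arrow of `C`. -/
def IsCut (W : List Q.A → K) (C : Finset Q.A) : Prop :=
  ∀ l : List Q.A, W l ≠ 0 → l.countP (fun a => decide (a ∈ C)) = 1

end FinQuiver

/-- Arrows of the premutated quiver `μ̃ₖ(Q)`. -/
inductive MutArrow (Q : FinQuiver) : Type
  | old : Q.A → MutArrow Q
  | star : Q.A → MutArrow Q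
  | comp : Q.A → Q.A → MutArrow Q
  deriving DecidableEq

/-- The grading of the left graded premutation at `k` with `l = 1` (cut grading):
    `d'(a*) = -d(a)` if `a` starts at `k`, `d'(b*) = -d(b) + 1` if `b` ends at `k`,
    `d'([ba]) = d(a) + d(b)`, and unchanged degrees on the remaining arrows. -/
def FinQuiver.mutDegreeL (Q : FinQuiver) (k : Q.V) (d : Q.A → ℤ) : MutArrow Q → ℤ
  | MutArrow.old a => d a
  | MutArrow.star a => if Q.src a = k then -d a else -d a + 1
  | MutArrow.comp b a => d a + d b

/-- Substitution defining `[W]`: each consecutive pair `b, a` with `tgt b = k` in a cycle is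
    replaced by the composite arrow `[ba]`; the other arrows are kept. -/
def FinQuiver.substAux (Q : FinQuiver) (k : Q.V) : List Q.A → List (MutArrow Q)
  | [] => []
  | [b] => if Q.tgt b = k then [] else [MutArrow.old b]
  | b :: a :: rest =>
      if Q.tgt b = k then MutArrow.comp b a :: Q.substAux k rest
      else MutArrow.old b :: Q.substAux k (a :: rest)

open FinQuiver MutArrow in
theorem subst_count_aux
    (Q : FinQuiver) (C : Finset Q.A) (k : Q.V)
    (hin : ∀ a : Q.A, Q.tgt a = k → a ∈ C)
    (hout : ∀ a : Q.A, Q.src a = k → a ∉ C) :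
    ∀ l : List Q.A, Q.IsPath l → (∀ b ∈ l.getLast?, Q.tgt b ≠ k) →
      (Q.substAux k l).countP
          (fun m => decide (Q.mutDegreeL k (Q.cutDegree C) m = 1)) =
        l.countP (fun a => decide (a ∈ C)) := by
  intro l
  induction l using FinQuiver.substAux.induct (Q := Q) (k := k) with
  | case1 => intro _ _; simp [FinQuiver.substAux]
  | case2 b hb =>
      intro _ hlast
      exact absurd hb (hlast b rfl)
  | case3 b hb =>
      intro _ _
      by_cases hbC : b ∈ C <;>
        simp [FinQuiver.substAux, hb, FinQuiver.mutDegreeL, FinQuiver.cutDegree, hbC]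
  | case4 b a rest hb ih =>
      intro hpath hlast
      have hpath' : Q.IsPath rest := by
        have := (List.isChain_cons.mp ((List.isChain_cons.mp hpath).2)).2
        exact this
      have hsa : Q.src a = k := by
        have := (List.isChain_cons_cons.mp hpath).1
        rw [← this]; exact hb
      have haC : a ∉ C := hout a hsa
      have hbC : b ∈ C := hin b hb
      have hlast' : ∀ x ∈ rest.getLast?, Q.tgt x ≠ k := by
        intro x hx
        apply hlast x
        cases rest with
        | nil => simp at hx
        | cons y ys =>
            rw [List.getLast?_cons_cons, List.getLast?_cons_cons]
            exact hx
      have hdeg : Q.mutDegreeL k (Q.cutDegree C) (MutArrow.comp b a) = 1 := by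
        simp [FinQuiver.mutDegreeL, FinQuiver.cutDegree, haC, hbC]
      simp only [FinQuiver.substAux, if_pos hb, List.countP_cons, hdeg]
      rw [ih hpath' hlast']
      simp [haC, hbC]
  | case5 b a rest hb ih =>
      intro hpath hlast
      have hpath' : Q.IsPath (a :: rest) := (List.isChain_cons_cons.mp hpath).2
      have hlast' : ∀ x ∈ (a :: rest).getLast?, Q.tgt x ≠ k := by
        intro x hx
        apply hlast x
        rw [List.getLast?_cons_cons]; exact hx
      simp only [FinQuiver.substAux, if_neg hb, List.countP_cons]
      rw [ih hpath' hlast']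
      by_cases haC : a ∈ C <;> by_cases hbC : b ∈ C <;>
        simp [List.countP_cons, FinQuiver.mutDegreeL, FinQuiver.cutDegree, haC, hbC]

open FinQuiver MutArrow in
/-- Let `(Q,W,C)` be a QP with a cut, `k` a strict source (all arrows of
    `Q` ending at `k` lie in `C`, all arrows starting at `k` do not; in particular `k` is a
    source of `Q_C`). In the left premutation `μ̃ₖᴸ(Q,W,C) = (Q',W',d')` every arrow has
    degree 0 or 1 — the reversed arrows `a*` (for `a : k → v`, `a ∉ C`) have degree 0, the
    reversed arrows `ρ*` (for `ρ : u → k`, `ρ ∈ C`) have degree 0, and the composite arrows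
    `[ρa]` have degree 1 — and the degree-1 arrows form a cut of `(Q',W')`: each term of
    `W' = [W] + Δ` contains exactly one arrow of degree 1. -/
theorem premutation_of_algebraic_cut_is_cut
    (Q : FinQuiver) (K : Type) [Field K] (W : List Q.A → K) (C : Finset Q.A)
    (k : Q.V)
    (hW : Q.IsPotential K W) (hC : Q.IsCut K W C)
    (hin : ∀ a : Q.A, Q.tgt a = k → a ∈ C)
    (hout : ∀ a : Q.A, Q.src a = k → a ∉ C)
    (hnoloop : ∀ a : Q.A, ¬(Q.src a = k ∧ Q.tgt a = k)) :
    -- the degrees of the new arrows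
    (∀ a : Q.A, Q.src a = k → Q.mutDegreeL k (Q.cutDegree C) (star a) = 0) ∧
    (∀ b : Q.A, Q.tgt b = k → Q.mutDegreeL k (Q.cutDegree C) (star b) = 0) ∧
    (∀ b a : Q.A, Q.tgt b = k → Q.src a = k →
        Q.mutDegreeL k (Q.cutDegree C) (comp b a) = 1) ∧
    -- every arrow of the mutated quiver has degree 0 or 1 (with the clauses above,
    -- it remains to record this for the unchanged arrows)
    (∀ a : Q.A, Q.mutDegreeL k (Q.cutDegree C) (old a) = 0 ∨
        Q.mutDegreeL k (Q.cutDegree C) (old a) = 1) ∧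
    -- the degree-1 arrows form a cut of (Q', W' = [W] + Δ):
    -- each term of [W] contains exactly one degree-1 arrow …
    (∀ c : List Q.A, W c ≠ 0 → (∀ a ∈ c.head?, Q.src a ≠ k) →
        (Q.substAux k c).countP
          (fun m => decide (Q.mutDegreeL k (Q.cutDegree C) m = 1)) = 1) ∧
    -- … and so does each term [ρa]·a*·ρ* of Δ
    (∀ a b : Q.A, Q.src a = k → Q.tgt b = k →
        ([comp b a, star a, star b] : List (MutArrow Q)).countP
          (fun m => decide (Q.mutDegreeL k (Q.cutDegree C) m = 1)) = 1) := by
  refine ⟨?_, ?_, ?_, ?_, ?_, ?_⟩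
  · intro a ha
    have : a ∉ C := hout a ha
    simp [FinQuiver.mutDegreeL, FinQuiver.cutDegree, ha, this]
  · intro b hb
    have hbC : b ∈ C := hin b hb
    have hsb : Q.src b ≠ k := fun h => hnoloop b ⟨h, hb⟩
    simp [FinQuiver.mutDegreeL, FinQuiver.cutDegree, hsb, hbC]
  · intro b a hb ha
    have haC : a ∉ C := hout a ha
    have hbC : b ∈ C := hin b hb
    simp [FinQuiver.mutDegreeL, FinQuiver.cutDegree, haC, hbC]
  · intro a
    by_cases haC : a ∈ C <;>
      simp [FinQuiver.mutDegreeL, FinQuiver.cutDegree, haC]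
  · intro c hc hhead
    obtain ⟨⟨hpath, x, y, hx, hy, hxy⟩, _⟩ := hW c hc
    have hlast : ∀ b ∈ c.getLast?, Q.tgt b ≠ k := by
      intro b hb
      have : b = y := by rw [hy] at hb; exact (Option.some.inj hb).symm
      subst this
      rw [hxy]
      exact hhead x hx
    rw [subst_count_aux Q C k hin hout c hpath hlast]
    exact hC c hc
  · intro a b ha hb
    have haC : a ∉ C := hout a ha
    have hbC : b ∈ C := hin b hb
    have hsb : Q.src b ≠ k := fun h => hnoloop b ⟨h, hb⟩
    simp [List.countP_cons, FinQuiver.mutDegreeL, FinQuiver.cutDegree,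
      haC, hbC, ha, hsb]
end
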